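/- arXiv:1805.00752 — 4 statements merged into one kernel-verified Lean document; each statement's English description precedes it below -/
import Mathlib

section
/- Let n ≥ 1 and let Ω ⊂ ℂⁿ be a bounded open set. Suppose f : ℂⁿ → ℂ is smooth, vanishes identically outside Ω, and all of its iterated real partial derivatives vanish at every point of the boundary ∂Ω (i.e. f vanishes to infinite order at ∂Ω). If ∫_Ω f·u₁·u₂ dλ = 0 for every pair of functions u₁, u₂ that are smooth and harmonic on some open neighborhood of the closure of Ω, then f ≡ 0. -/
/-!
Entire functions and their complex conjugates are harmonic, so `f` integrates to zero against
every product `u * star v` of entire functions, hence against the whole star algebra generated by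
the ℂ-linear functionals (polynomials in `z` and `z̄`). As `f` vanishes off the bounded set `Ω` it
has compact support, on which Stone–Weierstrass approximates `star f` uniformly by such
polynomials. Therefore `∫ |f|² = 0`, and the continuous function `f` vanishes.
-/

open MeasureTheory

/-- The Euclidean Laplacian of a function on ℂⁿ ≅ ℝ^{2n}: the sum of the 2n pure second
partial derivatives in the real coordinate directions `e_j` and `i·e_j`. -/
noncomputable def vLaplacian {n : ℕ} {E : Type*} [NormedAddCommGroup E] [NormedSpace ℝ E]
    (u : (Fin n → ℂ) → E) (x : Fin n → ℂ) : E :=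
  ∑ j : Fin n,
    (iteratedFDeriv ℝ 2 u x ![Pi.single j 1, Pi.single j 1] +
     iteratedFDeriv ℝ 2 u x ![Pi.single j Complex.I, Pi.single j Complex.I])

/-- A function is harmonic on a set if it is C² there and its Laplacian vanishes there. -/
def HarmonicOn {n : ℕ} {E : Type*} [NormedAddCommGroup E] [NormedSpace ℝ E]
    (u : (Fin n → ℂ) → E) (U : Set (Fin n → ℂ)) : Prop :=
  ContDiffOn ℝ 2 u U ∧ ∀ x ∈ U, vLaplacian u x = 0

section Harmonic

variable {n : ℕ}

theorem ContinuousLinearEquiv.vLaplacian_comp_left {E F : Type*} [NormedAddCommGroup E]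
    [NormedSpace ℝ E] [NormedAddCommGroup F] [NormedSpace ℝ F] (L : E ≃L[ℝ] F)
    (u : (Fin n → ℂ) → E) (x : Fin n → ℂ) :
    vLaplacian (L ∘ u) x = L (vLaplacian u x) := by
  simp [vLaplacian, L.iteratedFDeriv_comp_left]

theorem vLaplacian_eq_zero_of_contDiff_complex {E : Type*} [NormedAddCommGroup E]
    [NormedSpace ℂ E] {u : (Fin n → ℂ) → E} (hu : ContDiff ℂ 2 u) (x : Fin n → ℂ) :
    vLaplacian u x = 0 := by
  -- the second derivative is ℂ-bilinear, so `D²u x (i e, i e) = - D²u x (e, e)`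
  refine Finset.sum_eq_zero fun j _ => ?_
  have hI : ![Pi.single j Complex.I, Pi.single j Complex.I] =
      fun i => Complex.I • ![(Pi.single j 1 : Fin n → ℂ), Pi.single j 1] i := by
    ext i k
    fin_cases i <;> by_cases h : k = j <;> simp [h]
  simp only [← hu.contDiffAt.restrictScalars_iteratedFDeriv (𝕜 := ℝ), Function.comp_apply,
    ContinuousMultilinearMap.coe_restrictScalars, hI,
    ContinuousMultilinearMap.map_smul_univ]
  simp

theorem HarmonicOn.of_contDiff_complex {u : (Fin n → ℂ) → ℂ} (hu : ContDiff ℂ 2 u)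
    (V : Set (Fin n → ℂ)) : HarmonicOn u V :=
  ⟨(hu.restrict_scalars ℝ).contDiffOn, fun x _ => vLaplacian_eq_zero_of_contDiff_complex hu x⟩

theorem HarmonicOn.star_of_contDiff_complex {u : (Fin n → ℂ) → ℂ} (hu : ContDiff ℂ 2 u)
    (V : Set (Fin n → ℂ)) : HarmonicOn (fun z => star (u z)) V := by
  have h := HarmonicOn.of_contDiff_complex hu V
  refine ⟨(Complex.conjCLE.contDiff.comp_contDiffOn h.1), fun x hx => ?_⟩
  rw [show (fun z => star (u z)) = Complex.conjCLE ∘ u from rfl,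
    Complex.conjCLE.vLaplacian_comp_left, h.2 x hx, map_zero]

end Harmonic

theorem ContinuousMap.exists_mem_starSubalgebra_near_of_isCompact_of_separatesPoints
    {𝕜 X : Type*} [RCLike 𝕜] [TopologicalSpace X] {A : StarSubalgebra 𝕜 C(X, 𝕜)}
    (hA : A.SeparatesPoints) (f : C(X, 𝕜)) {K : Set X} (hK : IsCompact K) {ε : ℝ} (hε : 0 < ε) :
    ∃ g ∈ A, ∀ x ∈ K, ‖f x - g x‖ < ε := by
  have : CompactSpace K := isCompact_iff_compactSpace.mp hK
  let restrictK : C(X, 𝕜) →⋆ₐ[𝕜] C(K, 𝕜) :=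
    compStarAlgHom' 𝕜 𝕜 ⟨Subtype.val, continuous_subtype_val⟩
  have hsep : (A.map restrictK).SeparatesPoints := by
    intro x y hxy
    obtain ⟨_, ⟨g, hg, rfl⟩, hgxy⟩ := hA (Subtype.coe_ne_coe.mpr hxy)
    exact ⟨_, ⟨restrictK g, ⟨g, hg, rfl⟩, rfl⟩, hgxy⟩
  have hdense := starSubalgebra_topologicalClosure_eq_top_of_separatesPoints _ hsep
  have hfK : restrictK f ∈ closure (A.map restrictK : Set C(K, 𝕜)) := by
    change restrictK f ∈ (A.map restrictK).topologicalClosure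
    simp [hdense]
  obtain ⟨_, ⟨g, hg, rfl⟩, hdist⟩ := Metric.mem_closure_iff.mp hfK ε hε
  refine ⟨g, hg, fun x hx => ?_⟩
  have := (dist_apply_le_dist (⟨x, hx⟩ : K)).trans_lt hdist
  rwa [dist_eq_norm] at this

section Pairing

variable {X : Type*} [TopologicalSpace X] [MeasurableSpace X] [OpensMeasurableSpace X]
  {μ : Measure X} [IsFiniteMeasureOnCompacts μ] {𝕜 : Type*} [RCLike 𝕜] {f : X → 𝕜}

theorem integrable_mul_of_hasCompactSupport (hf : Continuous f) (hfc : HasCompactSupport f)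
    {g : X → 𝕜} (hg : Continuous g) : Integrable (fun x => f x * g x) μ :=
  (hf.mul hg).integrable_of_hasCompactSupport (hfc.mul_right)

theorem integral_mul_eq_zero_of_mem_span (hf : Continuous f) (hfc : HasCompactSupport f)
    {s : Set C(X, 𝕜)} (hs : ∀ g ∈ s, ∫ x, f x * g x ∂μ = 0) {g : C(X, 𝕜)}
    (hg : g ∈ Submodule.span 𝕜 s) : ∫ x, f x * g x ∂μ = 0 := by
  induction hg using Submodule.span_induction with
  | mem g hg => exact hs g hg
  | zero => simp
  | add g h _ _ hg hh =>
    simp only [ContinuousMap.add_apply, mul_add]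
    rw [integral_add (integrable_mul_of_hasCompactSupport hf hfc g.continuous)
      (integrable_mul_of_hasCompactSupport hf hfc h.continuous), hg, hh, add_zero]
  | smul c g _ hg =>
    simp only [ContinuousMap.smul_apply, smul_eq_mul, mul_left_comm _ c, integral_const_mul, hg,
      mul_zero]

theorem norm_integral_mul_le_of_forall_mem_tsupport (hf : Continuous f)
    (hfc : HasCompactSupport f) {g : X → 𝕜} {ε : ℝ}
    (hg : ∀ x ∈ tsupport f, ‖g x‖ ≤ ε) :
    ‖∫ x, f x * g x ∂μ‖ ≤ ε * ∫ x, ‖f x‖ ∂μ := by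
  rw [← integral_const_mul]
  refine norm_integral_le_of_norm_le
    ((hf.norm.integrable_of_hasCompactSupport hfc.norm).const_mul ε)
    (Filter.Eventually.of_forall fun x => ?_)
  by_cases hx : x ∈ tsupport f
  · rw [norm_mul, mul_comm]
    exact mul_le_mul_of_nonneg_right (hg x hx) (norm_nonneg _)
  · simp [image_eq_zero_of_notMem_tsupport hx]

theorem integral_mul_star_eq_zero_of_forall_integral_mul_eq_zero (hf : Continuous f)
    (hfc : HasCompactSupport f) {A : StarSubalgebra 𝕜 C(X, 𝕜)} (hA : A.SeparatesPoints)
    (h : ∀ g ∈ A, ∫ x, f x * g x ∂μ = 0) : ∫ x, f x * star (f x) ∂μ = 0 := by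
  set C := ∫ x, ‖f x‖ ∂μ
  have hC : 0 ≤ C := integral_nonneg fun x => norm_nonneg _
  refine norm_le_zero_iff.mp (le_of_forall_pos_le_add fun δ hδ => ?_)
  obtain ⟨g, hgA, hg⟩ :=
    ContinuousMap.exists_mem_starSubalgebra_near_of_isCompact_of_separatesPoints hA
      (star (⟨f, hf⟩ : C(X, 𝕜))) hfc (div_pos hδ (add_pos_of_nonneg_of_pos hC one_pos))
  have hsplit : ∫ x, f x * star (f x) ∂μ = ∫ x, f x * (star (f x) - g x) ∂μ := by
    simp only [mul_sub]
    rw [integral_sub (integrable_mul_of_hasCompactSupport hf hfc hf.star)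
      (integrable_mul_of_hasCompactSupport hf hfc g.continuous), h g hgA, sub_zero]
  calc ‖∫ x, f x * star (f x) ∂μ‖
      = ‖∫ x, f x * (star (f x) - g x) ∂μ‖ := by rw [hsplit]
    _ ≤ δ / (C + 1) * C :=
      norm_integral_mul_le_of_forall_mem_tsupport hf hfc fun x hx => (hg x hx).le
    _ ≤ 0 + δ := by
      rw [zero_add, div_mul_eq_mul_div, div_le_iff₀ (by positivity)]
      nlinarith

theorem eq_zero_of_integral_mul_star_eq_zero [μ.IsOpenPosMeasure] (hf : Continuous f)
    (hfc : HasCompactSupport f) (h : ∫ x, f x * star (f x) ∂μ = 0) : f = 0 := by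
  have hsq : ∫ x, ‖f x‖ ^ 2 ∂μ = 0 := by
    apply RCLike.ofReal_injective (K := 𝕜)
    rw [← integral_ofReal, RCLike.ofReal_zero, ← h]
    congr 1 with x
    rw [RCLike.star_def, RCLike.mul_conj, RCLike.ofReal_pow]
  funext x
  by_contra hx
  have hsq_support : HasCompactSupport fun y => ‖f y‖ ^ 2 :=
    hfc.comp_left (g := fun z : 𝕜 => ‖z‖ ^ 2) (by simp)
  have hsq_nonneg : (0 : X → ℝ) ≤ fun y => ‖f y‖ ^ 2 := fun y => by positivity
  have hsq_ne : ‖f x‖ ^ 2 ≠ 0 := by simpa using hx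
  exact (Continuous.integral_pos_of_hasCompactSupport_nonneg_nonzero (μ := μ) (hf.norm.pow 2)
    hsq_support hsq_nonneg hsq_ne).ne' hsq

end Pairing

def entireMulStarEntire (E : Type*) [NormedAddCommGroup E] [NormedSpace ℂ E] : Set C(E, ℂ) :=
  {g | ∃ u v : C(E, ℂ), ContDiff ℂ (⊤ : ℕ∞) u ∧ ContDiff ℂ (⊤ : ℕ∞) v ∧ g = u * star v}

section Polynomials

variable {E : Type*} [NormedAddCommGroup E] [NormedSpace ℂ E]

theorem StarSubalgebra.separatesPoints_adjoin_strongDual :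
    (StarAlgebra.adjoin ℂ (Set.range fun φ : StrongDual ℂ E => (φ : C(E, ℂ)))).SeparatesPoints := by
  intro x y hxy
  obtain ⟨φ, hφ⟩ := SeparatingDual.exists_separating_of_ne (R := ℂ) hxy
  exact ⟨_, ⟨φ, StarAlgebra.subset_adjoin ℂ _ ⟨φ, rfl⟩, rfl⟩, hφ⟩

theorem StarAlgebra.adjoin_le_span_mul_star {s : Set C(E, ℂ)}
    (hs : ∀ g ∈ s, ContDiff ℂ (⊤ : ℕ∞) g) :
    Subalgebra.toSubmodule (StarAlgebra.adjoin ℂ s).toSubalgebra ≤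
      Submodule.span ℂ (entireMulStarEntire E) := by
  rw [StarAlgebra.adjoin_toSubalgebra, Algebra.adjoin_eq_span]
  refine Submodule.span_mono fun m hm => ?_
  induction hm using Submonoid.closure_induction with
  | mem g hg =>
    rcases hg with hg | hg
    · exact ⟨g, 1, hs g hg, contDiff_const, by simp⟩
    · exact ⟨1, star g, contDiff_const, hs _ hg, by simp⟩
  | one => exact ⟨1, 1, contDiff_const, contDiff_const, by simp⟩
  | mul g h _ _ hg hh =>
    obtain ⟨u, v, hu, hv, rfl⟩ := hg
    obtain ⟨u', v', hu', hv', rfl⟩ := hh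
    exact ⟨u * u', v * v', hu.mul hu', hv.mul hv', by rw [star_mul']; ring⟩

end Polynomials

theorem linearized_calderon_domain_general {n : ℕ}
    (Ω : Set (Fin n → ℂ)) (hΩb : Bornology.IsBounded Ω)
    (f : (Fin n → ℂ) → ℂ) (hf : ContDiff ℝ (⊤ : ℕ∞) f)
    (hf0 : ∀ z ∉ Ω, f z = 0)
    (hint : ∀ (V : Set (Fin n → ℂ)) (u₁ u₂ : (Fin n → ℂ) → ℂ),
      IsOpen V → closure Ω ⊆ V →
      ContDiffOn ℝ (⊤ : ℕ∞) u₁ V → HarmonicOn u₁ V →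
      ContDiffOn ℝ (⊤ : ℕ∞) u₂ V → HarmonicOn u₂ V →
      ∫ z in Ω, f z * u₁ z * u₂ z = 0) :
    ∀ z, f z = 0 := by
  have hfc : HasCompactSupport f := HasCompactSupport.intro' hΩb.isCompact_closure
    isClosed_closure fun z hz => hf0 z fun h => hz (subset_closure h)
  have h2 : (2 : WithTop ℕ∞) ≤ (⊤ : ℕ∞) := WithTop.coe_le_coe.mpr le_top
  have hmul_star : ∀ g ∈ entireMulStarEntire (Fin n → ℂ), ∫ z, f z * g z = 0 := by
    rintro _ ⟨u, v, hu, hv, rfl⟩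
    rw [← setIntegral_eq_integral_of_forall_compl_eq_zero (s := Ω) fun z hz => by simp [hf0 z hz]]
    simpa [mul_assoc] using hint Set.univ u (fun z => star (v z)) isOpen_univ (Set.subset_univ _)
      (hu.restrict_scalars ℝ).contDiffOn (.of_contDiff_complex (hu.of_le h2) _)
      (Complex.conjCLE.contDiff.comp (hv.restrict_scalars ℝ)).contDiffOn
      (.star_of_contDiff_complex (hv.of_le h2) _)
  have hadjoin : ∀ g ∈ StarAlgebra.adjoin ℂ
      (Set.range fun φ : StrongDual ℂ (Fin n → ℂ) => (φ : C(Fin n → ℂ, ℂ))),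
      ∫ z, f z * g z = 0 := fun g hg =>
    integral_mul_eq_zero_of_mem_span hf.continuous hfc hmul_star
      (StarAlgebra.adjoin_le_span_mul_star (by rintro _ ⟨φ, rfl⟩; exact φ.contDiff) hg)
  exact congrFun (eq_zero_of_integral_mul_star_eq_zero hf.continuous hfc
    (integral_mul_star_eq_zero_of_forall_integral_mul_eq_zero hf.continuous hfc
      StarSubalgebra.separatesPoints_adjoin_strongDual hadjoin))

/-- Linearized Calderón problem for bounded domains in ℂⁿ: if a smooth function `f`
vanishing outside a bounded open set `Ω` and vanishing to infinite order on `∂Ω`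
integrates to zero against all products `u₁·u₂` of functions smooth and harmonic on a
neighborhood of `closure Ω`, then `f ≡ 0`. -/
theorem linearized_calderon_domain {n : ℕ} (hn : 1 ≤ n)
    (Ω : Set (Fin n → ℂ)) (hΩo : IsOpen Ω) (hΩb : Bornology.IsBounded Ω)
    (f : (Fin n → ℂ) → ℂ) (hf : ContDiff ℝ (⊤ : ℕ∞) f)
    (hf0 : ∀ z ∉ Ω, f z = 0)
    (hflat : ∀ (k : ℕ), ∀ z ∈ frontier Ω, iteratedFDeriv ℝ k f z = 0)
    (hint : ∀ (V : Set (Fin n → ℂ)) (u₁ u₂ : (Fin n → ℂ) → ℂ),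
      IsOpen V → closure Ω ⊆ V →
      ContDiffOn ℝ (⊤ : ℕ∞) u₁ V → HarmonicOn u₁ V →
      ContDiffOn ℝ (⊤ : ℕ∞) u₂ V → HarmonicOn u₂ V →
      ∫ z in Ω, f z * u₁ z * u₂ z = 0) :
    ∀ z, f z = 0 :=
  linearized_calderon_domain_general Ω hΩb f hf hf0 hint
end

section
/- Let n ≥ 1 and let f : ℂⁿ → ℂ be a smooth function with compact support. If ∫_{ℂⁿ} f(z)·F(z)·conj(G(z)) dλ(z) = 0 for every pair of entire holomorphic functions F, G : ℂⁿ → ℂ, then f ≡ 0. In other words, products of holomorphic and antiholomorphic functions form a complete set in the sense of the paper. -/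
/-!
For `w ∈ ℂⁿ` the Fourier character `z ↦ exp(-2πi Re⟪w, z⟫)` factors as `F z · conj (G z)` with
the entire functions `F = exp(-πi⟪w, ·⟫)` and `G = exp(πi⟪w, ·⟫)`. The hypothesis therefore says
that the Fourier transform of `f` vanishes identically, and Fourier inversion gives `f = 0`.
-/

open MeasureTheory Complex Real FourierTransform
open scoped RealInnerProductSpace InnerProductSpace ComplexConjugate

theorem Complex.exp_neg_two_pi_re_mul_I (a : ℂ) :
    cexp (↑(-2 * π * a.re) * I) = cexp (-π * I * a) * conj (cexp (π * I * a)) := by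
  rw [← exp_conj, ← Complex.exp_add, map_mul, map_mul, conj_ofReal, conj_I]
  push_cast
  rw [re_eq_add_conj]
  congr 1
  ring

theorem Continuous.eq_zero_of_fourier_eq_zero {V E : Type*} [NormedAddCommGroup V]
    [InnerProductSpace ℝ V] [FiniteDimensional ℝ V] [MeasurableSpace V] [BorelSpace V]
    [NormedAddCommGroup E] [NormedSpace ℂ E] [CompleteSpace E] {g : V → E} (hc : Continuous g)
    (hi : Integrable g) (h : 𝓕 g = 0) : g = 0 := by
  rw [← hc.fourierInv_fourier_eq hi (by simp [h]), h]
  ext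
  simp [fourierInv_eq]

section ComplexInnerProductSpace

attribute [local instance] InnerProductSpace.complexToReal

variable {V : Type*} [NormedAddCommGroup V] [InnerProductSpace ℂ V] [FiniteDimensional ℂ V]
  [MeasurableSpace V] [BorelSpace V]

theorem fourier_eq_zero_of_integral_mul_holomorphic_mul_conj_eq_zero {g : V → ℂ}
    (h : ∀ F G : V → ℂ, Differentiable ℂ F → Differentiable ℂ G →
      ∫ v, g v * F v * conj (G v) = 0) :
    𝓕 g = 0 := by
  ext w
  have hL : Differentiable ℂ fun v : V ↦ ⟪w, v⟫_ℂ := (innerSL ℂ w).differentiable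
  rw [fourier_eq', Pi.zero_apply, ← h _ _ ((hL.const_mul _).cexp) ((hL.const_mul _).cexp)]
  congr 1 with v
  rw [real_inner_eq_re_inner ℂ, ← inner_conj_symm, RCLike.conj_re, smul_eq_mul,
    RCLike.re_to_complex, exp_neg_two_pi_re_mul_I]
  ring

theorem eq_zero_of_integral_mul_holomorphic_mul_conj_eq_zero_of_innerProductSpace {g : V → ℂ}
    (hc : Continuous g) (hi : Integrable g)
    (h : ∀ F G : V → ℂ, Differentiable ℂ F → Differentiable ℂ G →
      ∫ v, g v * F v * conj (G v) = 0) :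
    g = 0 :=
  hc.eq_zero_of_fourier_eq_zero hi (fourier_eq_zero_of_integral_mul_holomorphic_mul_conj_eq_zero h)

theorem eq_zero_of_integral_mul_holomorphic_mul_conj_eq_zero {E : Type*} [NormedAddCommGroup E]
    [NormedSpace ℂ E] [FiniteDimensional ℂ E] [MeasurableSpace E] [BorelSpace E]
    (μ : Measure E) [μ.IsAddHaarMeasure] {f : E → ℂ} (hc : Continuous f) (hi : Integrable f μ)
    (h : ∀ F G : E → ℂ, Differentiable ℂ F → Differentiable ℂ G →
      ∫ z, f z * F z * conj (G z) ∂μ = 0) :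
    f = 0 := by
  let e : EuclideanSpace ℂ (Fin (Module.finrank ℂ E)) ≃L[ℂ] E :=
    .ofFinrankEq finrank_euclideanSpace_fin
  let eₘ := e.toHomeomorph.toMeasurableEquiv
  have : (volume.map eₘ).IsAddHaarMeasure := e.isAddHaarMeasure_map volume
  have hμ := (volume.map eₘ).isAddLeftInvariant_eq_smul μ
  suffices f ∘ e = 0 from funext fun x ↦ by simpa using congr_fun this (e.symm x)
  refine eq_zero_of_integral_mul_holomorphic_mul_conj_eq_zero_of_innerProductSpace
    (hc.comp e.continuous) ((integrable_map_equiv eₘ f).1 ?_) fun F G hF hG ↦ ?_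
  · rw [hμ]
    exact hi.smul_measure_nnreal
  · calc ∫ v, f (e v) * F v * conj (G v)
        = ∫ x, f x * F (e.symm x) * conj (G (e.symm x)) ∂volume.map eₘ := by
          rw [integral_map_equiv]; simp [eₘ]
      _ = _ • ∫ x, f x * F (e.symm x) * conj (G (e.symm x)) ∂μ := by
          rw [hμ, integral_smul_nnreal_measure]
      _ = 0 := by
          have := h _ _ (hF.comp e.symm.differentiable) (hG.comp e.symm.differentiable)
          simp only [Function.comp_apply] at this
          rw [this, smul_zero]

end ComplexInnerProductSpace

theorem products_holomorphic_antiholomorphic_complete_general {n : ℕ}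
    (f : (Fin n → ℂ) → ℂ) (hf : ContDiff ℝ (⊤ : ℕ∞) f) (hsupp : HasCompactSupport f)
    (hint : ∀ F G : (Fin n → ℂ) → ℂ, Differentiable ℂ F → Differentiable ℂ G →
      ∫ z, f z * F z * (starRingEnd ℂ) (G z) = 0) :
    f = 0 :=
  eq_zero_of_integral_mul_holomorphic_mul_conj_eq_zero volume hf.continuous
    (hf.continuous.integrable_of_hasCompactSupport hsupp) hint

/-- Completeness of products of holomorphic and antiholomorphic functions on ℂⁿ:
if a smooth compactly supported `f : ℂⁿ → ℂ` satisfies `∫ f · F · conj G = 0` for all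
entire holomorphic functions `F, G`, then `f ≡ 0`. -/
theorem products_holomorphic_antiholomorphic_complete {n : ℕ} (hn : 1 ≤ n)
    (f : (Fin n → ℂ) → ℂ) (hf : ContDiff ℝ (⊤ : ℕ∞) f) (hsupp : HasCompactSupport f)
    (hint : ∀ F G : (Fin n → ℂ) → ℂ, Differentiable ℂ F → Differentiable ℂ G →
      ∫ z, f z * F z * (starRingEnd ℂ) (G z) = 0) :
    f = 0 :=
  products_holomorphic_antiholomorphic_complete_general f hf hsupp hint
end

section
/- Let U ⊆ ℂⁿ be open, p ∈ U, and let F : U → ℂⁿ be holomorphic with F(p) = 0 and with complex Fréchet derivative DF(p) : ℂⁿ → ℂⁿ a ℂ-linear isomorphism. Define Φ : U → ℂ by Φ(z) = Σ_{j=1}^n F_j(z)², where F_j are the components of F. Then Φ is holomorphic, the derivative of Φ at p vanishes, and p is a nondegenerate critical point of both Re Φ and Im Φ, i.e. the real Hessian bilinear forms of Re Φ and of Im Φ at p are nondegenerate. -/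
/-!
Write `A = DF(p)`. Since `F p = 0`, the derivative `DΦ(z) = ∑ⱼ 2 Fⱼ(z) DFⱼ(z)` vanishes at `p`,
and differentiating it at `p` only needs continuity of `DF` there (holomorphic maps have continuous
derivatives by the Cauchy estimate): the complex Hessian is `D²Φ(p)(X, Y) = 2 (A X) ⬝ᵥ (A Y)`.
The real Hessians of `Re Φ` and `Im Φ` are its real and imaginary parts. If `A X ≠ 0`, then
`Y ↦ 2 (A X) ⬝ᵥ (A Y)` is onto `ℂ` because `A` is, so neither part can vanish for all `Y`.
-/

open Complex

open Asymptotics Filter Function Metric Set Topology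

section ProductRule

variable {𝕜 E F : Type*} [NontriviallyNormedField 𝕜] [NormedAddCommGroup E] [NormedSpace 𝕜 E]
  [NormedAddCommGroup F] [NormedSpace 𝕜 F]

theorem HasFDerivAt.smul_of_eq_zero {c : E → 𝕜} {c' : E →L[𝕜] 𝕜} {M : E → F} {p : E}
    (hc : HasFDerivAt c c' p) (hc0 : c p = 0) (hM : ContinuousAt M p) :
    HasFDerivAt (fun z => c z • M z) (c'.smulRight (M p)) p := by
  have hcO : c =O[𝓝 p] fun z => ‖z - p‖ := by
    simpa [hc0] using hc.isBigO_sub.norm_right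
  have hMo : (fun z => M z - M p) =o[𝓝 p] fun _ => (1 : ℝ) :=
    (isLittleO_one_iff ℝ).2 (tendsto_sub_nhds_zero_iff.2 hM)
  have hrem : HasFDerivAt (fun z => c z • (M z - M p)) (0 : E →L[𝕜] F) p := by
    rw [hasFDerivAt_iff_isLittleO]
    simpa [hc0] using (hcO.smul_isLittleO hMo).trans_isBigO (isBigO_refl _ _).norm_right
  convert (hc.smul_const (M p)).add hrem using 1
  · ext z; simp [smul_sub]
  · simp

theorem hasFDerivAt_sum_sq {ι : Type*} [Fintype ι] {f : ι → E → 𝕜} {z : E}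
    (hf : ∀ i, DifferentiableAt 𝕜 (f i) z) :
    HasFDerivAt (fun w => ∑ i, f i w ^ 2) (∑ i, (2 * f i z) • fderiv 𝕜 (f i) z) z :=
  HasFDerivAt.fun_sum fun i _ => by simpa using (hf i).hasFDerivAt.pow 2

theorem hasFDerivAt_sum_smul_fderiv_of_eq_zero {ι : Type*} [Fintype ι] {f : ι → E → 𝕜} {p : E}
    (hf : ∀ i, DifferentiableAt 𝕜 (f i) p) (hcont : ∀ i, ContinuousAt (fderiv 𝕜 (f i)) p)
    (h0 : ∀ i, f i p = 0) :
    HasFDerivAt (fun z => ∑ i, (2 * f i z) • fderiv 𝕜 (f i) z)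
      (∑ i, ((2 : 𝕜) • fderiv 𝕜 (f i) p).smulRight (fderiv 𝕜 (f i) p)) p :=
  HasFDerivAt.fun_sum fun i _ =>
    ((hf i).hasFDerivAt.const_mul 2).smul_of_eq_zero (by simp [h0]) (hcont i)

end ProductRule

section Holomorphic

variable {E F : Type*} [NormedAddCommGroup E] [NormedSpace ℂ E]
  [NormedAddCommGroup F] [NormedSpace ℂ F]

/-- The Cauchy estimate (Schwarz lemma) applied to `f (· + (z - p)) - f` on `ball p r`. -/
theorem norm_fderiv_sub_fderiv_le {f : E → F} {p z : E} {r η : ℝ} (hr : 0 < r)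
    (hfz : DifferentiableOn ℂ f (ball z r)) (hfp : DifferentiableOn ℂ f (ball p r))
    (hη : ∀ w ∈ ball p r, ‖f (w + (z - p)) - f w‖ ≤ η) :
    ‖fderiv ℂ f z - fderiv ℂ f p‖ ≤ 2 * η / r := by
  set g : E → F := fun w => f (w + (z - p)) - f w
  have hshift : ∀ w ∈ ball p r, DifferentiableAt ℂ (fun w => f (w + (z - p))) w := by
    intro w hw
    refine (differentiableAt_comp_add_right _).2 (hfz.differentiableAt (isOpen_ball.mem_nhds ?_))
    rwa [mem_ball, dist_eq_norm, show w + (z - p) - z = w - p by abel, ← dist_eq_norm]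
  have hg : ∀ w ∈ ball p r, DifferentiableAt ℂ g w := fun w hw =>
    (hshift w hw).sub (hfp.differentiableAt (isOpen_ball.mem_nhds hw))
  have hp : p ∈ ball p r := mem_ball_self hr
  have hgp : fderiv ℂ g p = fderiv ℂ f z - fderiv ℂ f p := by
    rw [fderiv_fun_sub (hshift p hp) (hfp.differentiableAt (isOpen_ball.mem_nhds hp)),
      fderiv_comp_add_right, add_sub_cancel]
  have hmaps : MapsTo g (ball p r) (closedBall (g p) (2 * η)) := fun w hw => by
    rw [mem_closedBall, dist_eq_norm]
    linarith [norm_sub_le (g w) (g p), hη w hw, hη p hp]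
  rw [← hgp]
  exact Complex.norm_fderiv_le_div_of_mapsTo_ball (fun w hw => (hg w hw).differentiableWithinAt)
    hmaps hr

/-- For `z` near `p`, `f (· + (z - p)) - f` is uniformly small on a ball around `p` (uniform
continuity of `f` on a compact ball), so `norm_fderiv_sub_fderiv_le` applies. -/
theorem continuousAt_fderiv_of_differentiableOn [ProperSpace E] {U : Set E} {f : E → F}
    (hf : DifferentiableOn ℂ f U) (hU : IsOpen U) {p : E} (hp : p ∈ U) :
    ContinuousAt (fderiv ℂ f) p := by
  obtain ⟨R, hR, hRU⟩ := nhds_basis_closedBall.mem_iff.1 (hU.mem_nhds hp)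
  have hfR := (isCompact_closedBall p R).uniformContinuousOn_of_continuous
    (hf.continuousOn.mono hRU)
  rw [Metric.continuousAt_iff]
  intro ε hε
  obtain ⟨δ, hδ, hfδ⟩ := uniformContinuousOn_iff_le.1 hfR (ε * R / 8) (by positivity)
  refine ⟨min δ (R / 2), by positivity, fun {z} hz => ?_⟩
  have hzδ : ‖z - p‖ < δ := by simpa [dist_eq_norm] using hz.trans_le (min_le_left _ _)
  have hzR : ‖z - p‖ < R / 2 := by simpa [dist_eq_norm] using hz.trans_le (min_le_right _ _)
  have hpR : ‖p - p‖ < R / 2 := by simpa using hR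
  have hball : ∀ c, ‖c - p‖ < R / 2 → ball c (R / 2) ⊆ closedBall p R := fun c hc w hw => by
    rw [mem_ball, dist_eq_norm] at hw
    rw [mem_closedBall, dist_eq_norm]
    linarith [norm_sub_le_norm_sub_add_norm_sub w c p]
  have hdiff : ∀ c, ‖c - p‖ < R / 2 → DifferentiableOn ℂ f (ball c (R / 2)) := fun c hc =>
    hf.mono ((hball c hc).trans hRU)
  have hsmall : ∀ w ∈ ball p (R / 2), ‖f (w + (z - p)) - f w‖ ≤ ε * R / 8 := fun w hw => by
    have hwz : w + (z - p) ∈ ball z (R / 2) := by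
      rwa [mem_ball, dist_eq_norm, show w + (z - p) - z = w - p by abel, ← dist_eq_norm]
    simpa [dist_eq_norm] using hfδ _ (hball z hzR hwz) _ (hball p hpR hw)
      (by simpa [dist_eq_norm] using hzδ.le)
  rw [dist_eq_norm]
  calc _ ≤ 2 * (ε * R / 8) / (R / 2) :=
        norm_fderiv_sub_fderiv_le (by positivity) (hdiff z hzR) (hdiff p hpR) hsmall
    _ < ε := by field_simp; linarith

theorem iteratedFDeriv_two_clm_comp_apply_of_hasFDerivAt {G : Type*} [NormedAddCommGroup G]
    [NormedSpace ℝ G] {f : E → F} {f' : E → E →L[ℂ] F} {f'' : E →L[ℂ] E →L[ℂ] F} {p : E}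
    (hf : ∀ᶠ z in 𝓝 p, HasFDerivAt f (f' z) z) (hf' : HasFDerivAt f' f'' p)
    (L : F →L[ℝ] G) (X Y : E) :
    iteratedFDeriv ℝ 2 (fun z => L (f z)) p ![X, Y] = L (f'' X Y) := by
  set T : (E →L[ℂ] F) →L[ℝ] E →L[ℝ] G :=
    (ContinuousLinearMap.compL ℝ E F G L).comp (ContinuousLinearMap.restrictScalarsL ℂ E F ℝ ℝ)
  have hLf : fderiv ℝ (fun z => L (f z)) =ᶠ[𝓝 p] fun z => T (f' z) := by
    filter_upwards [hf] with z hz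
    exact (L.hasFDerivAt.comp z (hz.restrictScalars ℝ)).fderiv
  rw [iteratedFDeriv_two_apply,
    ((T.hasFDerivAt.comp p (hf'.restrictScalars ℝ)).congr_of_eventuallyEq hLf).fderiv]
  rfl

end Holomorphic

theorem dotProduct_surjective_of_ne_zero {ι K : Type*} [Fintype ι] [DecidableEq ι] [Field K]
    {v : ι → K} (hv : v ≠ 0) : Surjective (v ⬝ᵥ ·) := by
  obtain ⟨i, hi⟩ := Function.ne_iff.1 hv
  exact fun z => ⟨Pi.single i (z / v i), by simp [dotProduct_single, mul_div_cancel₀ _ hi]⟩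

/-- If `F : U → ℂⁿ` is holomorphic on an open set `U ⊆ ℂⁿ`, `F p = 0`, and the complex
derivative `DF(p)` is a ℂ-linear isomorphism, then `Φ(z) = ∑ⱼ Fⱼ(z)²` is holomorphic on
`U`, its derivative vanishes at `p`, and `p` is a nondegenerate critical point of both
`Re Φ` and `Im Φ` (the real Hessian bilinear forms at `p` are nondegenerate). -/
theorem sum_of_squares_phase_nondegenerate_critical_point {n : ℕ}
    {U : Set (Fin n → ℂ)} (hU : IsOpen U) {p : Fin n → ℂ} (hp : p ∈ U)
    (F : (Fin n → ℂ) → (Fin n → ℂ)) (hF : DifferentiableOn ℂ F U)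
    (hFp : F p = 0) (hDF : Function.Bijective (fderiv ℂ F p)) :
    DifferentiableOn ℂ (fun z => ∑ j, (F z j) ^ 2) U ∧
    fderiv ℂ (fun z => ∑ j, (F z j) ^ 2) p = 0 ∧
    (∀ X : Fin n → ℂ,
      (∀ Y : Fin n → ℂ,
        iteratedFDeriv ℝ 2 (fun z => (∑ j, (F z j) ^ 2).re) p ![X, Y] = 0) → X = 0) ∧
    (∀ X : Fin n → ℂ,
      (∀ Y : Fin n → ℂ,
        iteratedFDeriv ℝ 2 (fun z => (∑ j, (F z j) ^ 2).im) p ![X, Y] = 0) → X = 0) := by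
  set A := fderiv ℂ F p
  have hFj : ∀ z ∈ U, ∀ j, DifferentiableAt ℂ (fun w => F w j) z := fun z hz =>
    differentiableAt_pi.1 (hF.differentiableAt (hU.mem_nhds hz))
  have hΦ : ∀ z ∈ U, HasFDerivAt (fun z => ∑ j, F z j ^ 2)
      (∑ j, (2 * F z j) • fderiv ℂ (fun w => F w j) z) z := fun z hz =>
    hasFDerivAt_sum_sq (hFj z hz)
  have hΦ' := hasFDerivAt_sum_smul_fderiv_of_eq_zero (hFj p hp)
    (fun j => continuousAt_fderiv_of_differentiableOn
      (fun z hz => (hFj z hz j).differentiableWithinAt) hU hp) (fun j => by simp [hFp])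
  have hess : ∀ (L : ℂ →L[ℝ] ℝ) (X Y : Fin n → ℂ),
      iteratedFDeriv ℝ 2 (fun z => L (∑ j, F z j ^ 2)) p ![X, Y] = L ((2 • A X) ⬝ᵥ A Y) := by
    intro L X Y
    rw [iteratedFDeriv_two_clm_comp_apply_of_hasFDerivAt
      (eventually_of_mem (hU.mem_nhds hp) hΦ) hΦ']
    simp [dotProduct, fderiv_apply (hF.differentiableAt (hU.mem_nhds hp)), A, mul_assoc]
  have nondeg : ∀ (L : ℂ →L[ℝ] ℝ) (w : ℂ), L w ≠ 0 →
      ∀ X, (∀ Y, L ((2 • A X) ⬝ᵥ A Y) = 0) → X = 0 := by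
    intro L w hw X hX
    by_contra hX0
    obtain ⟨v, rfl⟩ := dotProduct_surjective_of_ne_zero
      (smul_ne_zero two_ne_zero ((map_ne_zero_iff A hDF.1).2 hX0)) w
    obtain ⟨Y, rfl⟩ := hDF.2 v
    exact hw (hX Y)
  refine ⟨fun z hz => (hΦ z hz).differentiableAt.differentiableWithinAt,
    by ext; simp [(hΦ p hp).fderiv, hFp],
    fun X hX => nondeg reCLM 1 (by simp) X fun Y => by rw [← hess]; exact hX Y,
    fun X hX => nondeg imCLM I (by simp) X fun Y => by rw [← hess]; exact hX Y⟩
end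

section
/- Let U ⊆ ℂⁿ be open and Φ : U → ℂ holomorphic. Then for Lebesgue-almost every w = (w₁,…,wₙ) ∈ ℂⁿ, the real-valued function ψ_w(z) = Im( Φ(z) − Σ_{j=1}^n w_j z_j ) is a Morse function on U, i.e. every critical point of ψ_w in U is nondegenerate. -/
/-!
Let `S ⊆ U` be the set where the complex Hessian `D²Φ` is singular, and let `∇Φ` be the
holomorphic gradient. The real Jacobian of `∇Φ` is the realification of `D²Φ`, so it is singular
on `S` and `∇Φ(S)` is Lebesgue-null by the easy half of Sard's theorem. Fix `w ∉ ∇Φ(S)` and a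
critical point `p` of `ψ_w`. A ℂ-linear functional is determined by its imaginary part, so
`dΦ(p) = ⟨w, ·⟩`, i.e. `∇Φ(p) = w`; hence `p ∉ S`. The real Hessian of `ψ_w` at `p` is
`(X, Y) ↦ Im D²Φ(p)(X, Y)`, so its kernel is the kernel of `D²Φ(p)`, which is trivial.

The analytic input is that `∇Φ` is holomorphic: each directional derivative `z ↦ DΦ(z) v` is a
Cauchy integral over a circle in the complex line through `z` in direction `v`, and it can be
differentiated under the integral sign thanks to the Cauchy estimate for `DΦ`.
-/

open Filter Metric Complex MeasureTheory
open scoped Topology Real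

section FiniteDimensional

variable {𝕜 D E F : Type*} [NontriviallyNormedField 𝕜] [CompleteSpace 𝕜]
  [NormedAddCommGroup D] [NormedSpace 𝕜 D] [NormedAddCommGroup E] [NormedSpace 𝕜 E]
  [NormedAddCommGroup F] [NormedSpace 𝕜 F] [FiniteDimensional 𝕜 E]

theorem differentiableAt_clm_apply_iff {f : D → E →L[𝕜] F} {x : D} :
    DifferentiableAt 𝕜 f x ↔ ∀ y, DifferentiableAt 𝕜 (fun x => f x y) x := by
  refine ⟨fun h y => h.clm_apply (differentiableAt_const y), fun h => ?_⟩
  have hd : Module.finrank 𝕜 E = Module.finrank 𝕜 (Fin (Module.finrank 𝕜 E) → 𝕜) :=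
    (Module.finrank_fin_fun 𝕜).symm
  let e := ((ContinuousLinearEquiv.ofFinrankEq hd).arrowCongr (1 : F ≃L[𝕜] F)).trans
    (ContinuousLinearEquiv.piRing (Fin (Module.finrank 𝕜 E)))
  rw [← e.comp_differentiableAt_iff]
  exact differentiableAt_pi.2 fun i => h _

end FiniteDimensional

namespace Complex

variable {E F : Type*} [NormedAddCommGroup E] [NormedSpace ℂ E]
  [NormedAddCommGroup F] [NormedSpace ℂ F] {f : E → F} {p : E}

theorem exists_eventually_norm_fderiv_le (hf : ∀ᶠ z in 𝓝 p, DifferentiableAt ℂ f z) :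
    ∃ C, ∀ᶠ z in 𝓝 p, ‖fderiv ℂ f z‖ ≤ C := by
  obtain ⟨δ, hδ, hball⟩ := Metric.eventually_nhds_iff_ball.1
    (hf.and (hf.self_of_nhds.continuousAt.eventually (ball_mem_nhds (f p) one_pos)))
  refine ⟨2 / (δ / 2), eventually_of_mem (ball_mem_nhds p (half_pos hδ)) fun z hz => ?_⟩
  have hsub : ball z (δ / 2) ⊆ ball p δ := ball_subset_ball' (by rw [mem_ball] at hz; linarith)
  -- Cauchy estimate: `f` maps `ball z (δ / 2)` into `closedBall (f z) 2`.
  refine norm_fderiv_le_div_of_mapsTo_ball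
    (fun y hy => (hball y (hsub hy)).1.differentiableWithinAt) (fun y hy => ?_) (half_pos hδ)
  have hy := (hball y (hsub hy)).2
  have hz := (hball z (hsub (mem_ball_self (half_pos hδ)))).2
  rw [mem_closedBall]
  linarith [dist_triangle_right (f y) (f z) (f p)]

variable [CompleteSpace F]

theorem fderiv_apply_eq_circleIntegral {z v : E} {r : ℝ} (hr : 0 < r)
    (hf : ∀ ζ ∈ closedBall (0 : ℂ) r, DifferentiableAt ℂ f (z + ζ • v)) :
    fderiv ℂ f z v = (2 * π * I)⁻¹ • ∮ ζ in C(0, r), (1 / ζ ^ 2) • f (z + ζ • v) := by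
  have hz : DifferentiableAt ℂ f z := by simpa using hf 0 (mem_closedBall_self hr.le)
  have hline : HasDerivAt (fun ζ : ℂ => f (z + ζ • v)) (fderiv ℂ f z v) 0 :=
    hz.hasFDerivAt.hasLineDerivAt v
  have hdisc : DifferentiableOn ℂ (fun ζ : ℂ => f (z + ζ • v)) (closedBall 0 r) := fun ζ hζ =>
    ((hf ζ hζ).comp ζ ((differentiableAt_id.smul_const v).const_add z)).differentiableWithinAt
  have hcauchy := hdisc.deriv_eq_smul_circleIntegral hr
  simp only [sub_zero] at hcauchy
  rw [hcauchy, hline.deriv, smul_smul, inv_mul_cancel₀ (by simp [Real.pi_ne_zero, I_ne_zero]),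
    one_smul]

variable [FiniteDimensional ℂ E] [SecondCountableTopology F]

theorem hasFDerivAt_intervalIntegral_smul_comp_add {c : ℝ → ℂ} {γ : ℝ → E} {s : Set E}
    {a b C : ℝ} (hc : Continuous c) (hγ : Continuous γ) (hs : s ∈ 𝓝 p)
    (hf : ∀ x ∈ s, ∀ θ, DifferentiableAt ℂ f (x + γ θ))
    (hC : ∀ x ∈ s, ∀ θ, ‖fderiv ℂ f (x + γ θ)‖ ≤ C) :
    HasFDerivAt (fun z => ∫ θ in a..b, c θ • f (z + γ θ))
      (∫ θ in a..b, c θ • fderiv ℂ f (p + γ θ)) p := by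
  borelize E
  have hcont : ∀ x ∈ s, Continuous fun θ => c θ • f (x + γ θ) := fun x hx =>
    hc.smul (continuous_iff_continuousAt.2 fun θ => (hf x hx θ).continuousAt.comp
      (f := fun θ => x + γ θ) (continuous_const.add hγ).continuousAt)
  refine intervalIntegral.hasFDerivAt_integral_of_dominated_of_fderiv_le (𝕜 := ℂ) (μ := volume)
    (F := fun z θ => c θ • f (z + γ θ)) (F' := fun z θ => c θ • fderiv ℂ f (z + γ θ))
    (bound := fun θ => ‖c θ‖ * C) hs ?_ ((hcont p (mem_of_mem_nhds hs)).intervalIntegrable _ _)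
    ?_ ?_ ((hc.norm.mul continuous_const).intervalIntegrable _ _) ?_
  · filter_upwards [hs] with x hx using (hcont x hx).aestronglyMeasurable
  · exact hc.aestronglyMeasurable.smul
      ((measurable_fderiv ℂ f).comp (measurable_const.add hγ.measurable)).aestronglyMeasurable
  · refine Eventually.of_forall fun θ _ x hx => ?_
    rw [norm_smul]
    gcongr
    exact hC x hx θ
  · exact Eventually.of_forall fun θ _ x hx =>
      ((hf x hx θ).hasFDerivAt.comp x ((hasFDerivAt_id x).add_const (γ θ))).const_smul (c θ)

theorem differentiableAt_fderiv_apply (hf : ∀ᶠ z in 𝓝 p, DifferentiableAt ℂ f z) (v : E) :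
    DifferentiableAt ℂ (fun z => fderiv ℂ f z v) p := by
  obtain ⟨C, hC⟩ := exists_eventually_norm_fderiv_le hf
  obtain ⟨δ, hδ, hball⟩ := Metric.eventually_nhds_iff_ball.1 (hf.and hC)
  set r := δ / (2 * (‖v‖ + 1))
  have hr : 0 < r := by positivity
  have hmem : ∀ z ∈ ball p (δ / 2), ∀ ζ : ℂ, ‖ζ‖ ≤ r → z + ζ • v ∈ ball p δ := by
    intro z hz ζ hζ
    have hrv : r * ‖v‖ ≤ δ / 2 := by
      rw [div_mul_eq_mul_div, div_le_iff₀ (by positivity)]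
      nlinarith [norm_nonneg v]
    rw [mem_ball, dist_eq_norm] at hz ⊢
    rw [add_sub_right_comm]
    calc ‖z - p + ζ • v‖ ≤ ‖z - p‖ + ‖ζ‖ * ‖v‖ := (norm_add_le _ _).trans_eq (by rw [norm_smul])
      _ < δ / 2 + r * ‖v‖ := add_lt_add_of_lt_of_le hz (by gcongr)
      _ ≤ δ := by linarith
  have hcircle : ∀ θ, ‖circleMap 0 r θ‖ ≤ r := fun θ => by simp [abs_of_pos hr]
  set c : ℝ → ℂ := fun θ => deriv (circleMap 0 r) θ * (1 / circleMap 0 r θ ^ 2)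
  have hc : Continuous c := by
    simp only [c, deriv_circleMap]
    exact ((continuous_circleMap 0 r).mul continuous_const).mul (continuous_const.div
      ((continuous_circleMap 0 r).pow 2) fun θ => pow_ne_zero 2 (circleMap_ne_center hr.ne'))
  have hγ : Continuous fun θ => circleMap 0 r θ • v :=
    (continuous_circleMap 0 r).smul continuous_const
  have hformula : (fun z => fderiv ℂ f z v) =ᶠ[𝓝 p]
      fun z => (2 * π * I)⁻¹ • ∫ θ in 0..2 * π, c θ • f (z + circleMap 0 r θ • v) := by
    filter_upwards [ball_mem_nhds p (half_pos hδ)] with z hz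
    rw [fderiv_apply_eq_circleIntegral hr fun ζ hζ =>
      (hball _ (hmem z hz ζ (mem_closedBall_zero_iff.1 hζ))).1, circleIntegral]
    simp only [c, smul_smul]
  rw [hformula.differentiableAt_iff]
  exact ((hasFDerivAt_intervalIntegral_smul_comp_add hc hγ (ball_mem_nhds p (half_pos hδ))
    (fun x hx θ => (hball _ (hmem x hx _ (hcircle θ))).1)
    (fun x hx θ => (hball _ (hmem x hx _ (hcircle θ))).2)).differentiableAt).const_smul _

theorem differentiableAt_fderiv (hf : ∀ᶠ z in 𝓝 p, DifferentiableAt ℂ f z) :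
    DifferentiableAt ℂ (fderiv ℂ f) p :=
  differentiableAt_clm_apply_iff.2 (differentiableAt_fderiv_apply hf)

end Complex

section ImaginaryPart

variable {E : Type*} [NormedAddCommGroup E] [NormedSpace ℂ E] {f : E → ℂ} {x : E}

theorem ContinuousLinearMap.eq_zero_of_forall_im_apply_eq_zero {A : E →L[ℂ] ℂ}
    (h : ∀ x, (A x).im = 0) : A = 0 := by
  ext x
  apply Complex.ext
  · simpa using h (I • x)
  · simpa using h x

theorem DifferentiableAt.fderiv_im (hf : DifferentiableAt ℂ f x) :
    fderiv ℝ (fun z => (f z).im) x = imCLM.comp ((fderiv ℂ f x).restrictScalars ℝ) :=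
  (imCLM.hasFDerivAt.comp x (hf.hasFDerivAt.restrictScalars ℝ)).fderiv

theorem DifferentiableAt.fderiv_im_eq_zero_iff (hf : DifferentiableAt ℂ f x) :
    fderiv ℝ (fun z => (f z).im) x = 0 ↔ fderiv ℂ f x = 0 := by
  refine ⟨fun h => ContinuousLinearMap.eq_zero_of_forall_im_apply_eq_zero fun y => ?_,
    fun h => by rw [hf.fderiv_im, h]; rfl⟩
  simpa [hf.fderiv_im] using congrArg (· y) h

theorem iteratedFDeriv_two_im_apply (hf : ∀ᶠ z in 𝓝 x, DifferentiableAt ℂ f z)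
    (hf' : DifferentiableAt ℂ (fderiv ℂ f) x) (X Y : E) :
    iteratedFDeriv ℝ 2 (fun z => (f z).im) x ![X, Y] = (fderiv ℂ (fderiv ℂ f) x X Y).im := by
  let T : (E →L[ℂ] ℂ) →L[ℝ] E →L[ℝ] ℝ :=
    (ContinuousLinearMap.compL ℝ E ℂ ℝ imCLM).comp
      (ContinuousLinearMap.restrictScalarsL ℂ E ℂ ℝ ℝ)
  have hT : fderiv ℝ (fun z => (f z).im) =ᶠ[𝓝 x] fun z => T (fderiv ℂ f z) :=
    hf.mono fun z hz => hz.fderiv_im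
  have hT' : HasFDerivAt (fun z => T (fderiv ℂ f z))
      (T.comp ((fderiv ℂ (fderiv ℂ f) x).restrictScalars ℝ)) x :=
    T.hasFDerivAt.comp x (hf'.hasFDerivAt.restrictScalars ℝ)
  rw [iteratedFDeriv_two_apply, hT.fderiv_eq, hT'.fderiv]
  rfl

end ImaginaryPart

section LinearPerturbation

variable {𝕜 E F : Type*} [NontriviallyNormedField 𝕜] [NormedAddCommGroup E] [NormedSpace 𝕜 E]
  [NormedAddCommGroup F] [NormedSpace 𝕜 F] {f : E → F} {p : E}

theorem DifferentiableAt.fderiv_sub_clm (hf : DifferentiableAt 𝕜 f p) (L : E →L[𝕜] F) :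
    fderiv 𝕜 (fun z => f z - L z) p = fderiv 𝕜 f p - L := by
  rw [fderiv_fun_sub hf L.differentiableAt, L.fderiv]

theorem fderiv_fderiv_sub_clm (hf : ∀ᶠ z in 𝓝 p, DifferentiableAt 𝕜 f z) (L : E →L[𝕜] F) :
    fderiv 𝕜 (fderiv 𝕜 fun z => f z - L z) p = fderiv 𝕜 (fderiv 𝕜 f) p := by
  rw [Filter.EventuallyEq.fderiv_eq (hf.mono fun z hz => hz.fderiv_sub_clm L), fderiv_sub_const]

end LinearPerturbation

theorem addHaar_image_eq_zero_of_fderivWithin_not_injective {E : Type*} [NormedAddCommGroup E]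
    [NormedSpace ℝ E] [FiniteDimensional ℝ E] [MeasurableSpace E] [BorelSpace E]
    (μ : Measure E) [μ.IsAddHaarMeasure] {f : E → E} {f' : E → E →L[ℝ] E}
    {s : Set E} (hf' : ∀ x ∈ s, HasFDerivWithinAt f (f' x) s x)
    (h : ∀ x ∈ s, ¬ Function.Injective (f' x)) : μ (f '' s) = 0 :=
  addHaar_image_eq_zero_of_det_fderivWithin_eq_zero μ hf' fun x hx =>
    LinearMap.det_eq_zero_iff_ker_ne_bot.2 (by rw [Ne, LinearMap.ker_eq_bot]; exact h x hx)

theorem addHaar_image_fderiv_eq_zero_of_not_injective {E : Type*} [NormedAddCommGroup E]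
    [NormedSpace ℂ E] [FiniteDimensional ℂ E] [MeasurableSpace E] [BorelSpace E]
    (μ : Measure E) [μ.IsAddHaarMeasure] (e : (E →L[ℂ] ℂ) ≃L[ℂ] E) {Φ : E → ℂ} {s : Set E}
    (hΦ : ∀ q ∈ s, ∀ᶠ z in 𝓝 q, DifferentiableAt ℂ Φ z)
    (hs : ∀ q ∈ s, ¬ Function.Injective (fderiv ℂ (fderiv ℂ Φ) q)) :
    μ ((e ∘ fderiv ℂ Φ) '' s) = 0 :=
  addHaar_image_eq_zero_of_fderivWithin_not_injective μ
    (fun q hq => (((e : (E →L[ℂ] ℂ) →L[ℂ] E).hasFDerivAt.comp q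
      (differentiableAt_fderiv (hΦ q hq)).hasFDerivAt).restrictScalars ℝ).hasFDerivWithinAt)
    fun q hq hinj => hs q hq (Function.Injective.of_comp (f := e) hinj)

theorem ContinuousLinearEquiv.piRing_symm_apply {𝕜 E ι : Type*} [NontriviallyNormedField 𝕜]
    [CompleteSpace 𝕜] [NormedAddCommGroup E] [NormedSpace 𝕜 E] [Fintype ι] [DecidableEq ι]
    (f : ι → E) (g : ι → 𝕜) :
    (ContinuousLinearEquiv.piRing (𝕜 := 𝕜) ι).symm f g = ∑ i, g i • f i :=
  LinearEquiv.piRing_symm_apply (R := 𝕜) (S := 𝕜) f g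

/-- Genericity of Morse imaginary parts among linear holomorphic perturbations: if
`Φ` is holomorphic on an open set `U ⊆ ℂⁿ`, then for Lebesgue-almost every `w ∈ ℂⁿ` the
function `ψ_w(z) = Im (Φ(z) − ∑ⱼ wⱼ zⱼ)` is Morse on `U`, i.e. every critical point of
`ψ_w` in `U` has nondegenerate real Hessian. -/
theorem ae_linear_perturbation_im_morse {n : ℕ} {U : Set (Fin n → ℂ)} (hU : IsOpen U)
    {Φ : (Fin n → ℂ) → ℂ} (hΦ : DifferentiableOn ℂ Φ U) :
    ∀ᵐ w : Fin n → ℂ, ∀ p ∈ U,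
      fderiv ℝ (fun z => (Φ z - ∑ j, w j * z j).im) p = 0 →
      ∀ X : Fin n → ℂ,
        (∀ Y : Fin n → ℂ,
          iteratedFDeriv ℝ 2 (fun z => (Φ z - ∑ j, w j * z j).im) p ![X, Y] = 0) →
        X = 0 := by
  let e := ContinuousLinearEquiv.piRing (𝕜 := ℂ) (E := ℂ) (Fin n)
  have hΦ' : ∀ q ∈ U, ∀ᶠ z in 𝓝 q, DifferentiableAt ℂ Φ z := fun q hq =>
    eventually_of_mem (hU.mem_nhds hq) fun z hz => hΦ.differentiableAt (hU.mem_nhds hz)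
  have hnull := addHaar_image_fderiv_eq_zero_of_not_injective volume e
    (s := {q ∈ U | ¬ Function.Injective (fderiv ℂ (fderiv ℂ Φ) q)})
    (fun q hq => hΦ' q hq.1) fun q hq => hq.2
  filter_upwards [measure_eq_zero_iff_ae_notMem.mp hnull] with w hw p hp hcrit X hX
  let L := e.symm w
  have hL : (fun z => (Φ z - ∑ j, w j * z j).im) = fun z => (Φ z - L z).im := by
    funext z
    simp [L, e, ContinuousLinearEquiv.piRing_symm_apply, mul_comm]
  rw [hL] at hcrit hX
  have hf : ∀ᶠ z in 𝓝 p, DifferentiableAt ℂ (fun z => Φ z - L z) z :=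
    (hΦ' p hp).mono fun z hz => hz.sub L.differentiableAt
  have hDp : fderiv ℂ Φ p = L := by
    rw [← sub_eq_zero, ← (hΦ' p hp).self_of_nhds.fderiv_sub_clm L]
    exact hf.self_of_nhds.fderiv_im_eq_zero_iff.1 hcrit
  have hker : fderiv ℂ (fderiv ℂ Φ) p X = 0 := by
    rw [← fderiv_fderiv_sub_clm (hΦ' p hp) L]
    refine ContinuousLinearMap.eq_zero_of_forall_im_apply_eq_zero fun Y => ?_
    rw [← iteratedFDeriv_two_im_apply hf (differentiableAt_fderiv hf)]
    exact hX Y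
  by_contra hX0
  exact hw ⟨p, ⟨hp, fun hinj => hX0 (hinj (hker.trans (map_zero _).symm))⟩, by simp [hDp, L]⟩
end
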